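/- Let σ : ℝ → ℝ be smooth with σ(t) ≠ 0 for all t, and let g₁, g₂ : ℝ → ℝ be smooth. Then the Lie bracket of the vector fields Y(g₁) and Y(g₂) on ℝ⁴ equals X(f), where f(t) := −(1/(2σ(t)))(g₁(t) g₂'(t) − g₁'(t) g₂(t)). In particular, the symmetry algebra of the generalized Burgers equation ∂x(∂t u + u ∂x u − ∂x² u) + σ(t) ∂y² u = 0, realized by the fields X(f) + Y(g), has a non-Abelian Kac–Moody structure. -/

import Mathlib

/-- Lie bracket of vector fields on `ℝ⁴`, identified with smooth maps `ℝ⁴ → ℝ⁴`: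
`[V,W](p) = DW(p)(V(p)) − DV(p)(W(p))`. -/
noncomputable def VBracket (V W : ℝ × ℝ × ℝ × ℝ → ℝ × ℝ × ℝ × ℝ) :
    ℝ × ℝ × ℝ × ℝ → ℝ × ℝ × ℝ × ℝ :=
  fun p => fderiv ℝ W p (V p) - fderiv ℝ V p (W p)

/-- The vector field `X(f) = f(t)∂x + f'(t)∂u` in coordinates `(x,y,t,u)`. -/
noncomputable def Xfield (f : ℝ → ℝ) : ℝ × ℝ × ℝ × ℝ → ℝ × ℝ × ℝ × ℝ :=
  fun p => (f p.2.2.1, 0, 0, deriv f p.2.2.1)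

/-- The vector field
`Y(g) = g(t)∂y − (g'(t)/(2σ(t))) y ∂x − (d/dt)(g'(t)/(2σ(t))) y ∂u`
in coordinates `(x,y,t,u)`. -/
noncomputable def Yfield (σ g : ℝ → ℝ) : ℝ × ℝ × ℝ × ℝ → ℝ × ℝ × ℝ × ℝ :=
  fun p =>
    (-(deriv g p.2.2.1 / (2 * σ p.2.2.1)) * p.2.1,
     g p.2.2.1,
     0,
     -(deriv (fun s => deriv g s / (2 * σ s)) p.2.2.1) * p.2.1)

/-!
Both fields `Y(gᵢ)` are of the form `g(t)∂y − a(t) y ∂x − b(t) y ∂u` and have no `∂t`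
component, so in the bracket only the `y`-derivatives of the coefficients survive; this
leaves `(a₁g₂ − a₂g₁)∂x + (b₁g₂ − b₂g₁)∂u`. With `aᵢ = gᵢ'/(2σ)` and `bᵢ = aᵢ'`, the cross
terms `a₁g₂' − a₂g₁'` cancel, so the `∂u` coefficient is the derivative of the `∂x` one.
-/

def shearField (a g b : ℝ → ℝ) : ℝ × ℝ × ℝ × ℝ → ℝ × ℝ × ℝ × ℝ :=
  fun p => (-(a p.2.2.1) * p.2.1, g p.2.2.1, 0, -(b p.2.2.1) * p.2.1)

lemma Yfield_eq_shearField (σ g : ℝ → ℝ) :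
    Yfield σ g = shearField (fun s => deriv g s / (2 * σ s)) g
      (deriv fun s => deriv g s / (2 * σ s)) :=
  rfl

lemma fderiv_shearField_apply {a g b : ℝ → ℝ} {p : ℝ × ℝ × ℝ × ℝ}
    (ha : DifferentiableAt ℝ a p.2.2.1) (hg : DifferentiableAt ℝ g p.2.2.1)
    (hb : DifferentiableAt ℝ b p.2.2.1) {v : ℝ × ℝ × ℝ × ℝ} (hv : v.2.2.1 = 0) :
    fderiv ℝ (shearField a g b) p v = (-(a p.2.2.1) * v.2.1, 0, 0, -(b p.2.2.1) * v.2.1) := by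
  have ht := (hasFDerivAt_snd (𝕜 := ℝ) (p := p)).snd.fst
  have hy := (hasFDerivAt_snd (𝕜 := ℝ) (p := p)).fst
  have H := ((ha.hasDerivAt.comp_hasFDerivAt p ht).neg.mul hy).prodMk
    ((hg.hasDerivAt.comp_hasFDerivAt p ht).prodMk
      ((hasFDerivAt_const (0 : ℝ) p).prodMk ((hb.hasDerivAt.comp_hasFDerivAt p ht).neg.mul hy)))
  rw [HasFDerivAt.fderiv (f := shearField a g b) H]
  simp [hv]

lemma VBracket_shearField {a₁ g₁ b₁ a₂ g₂ b₂ : ℝ → ℝ}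
    (ha₁ : Differentiable ℝ a₁) (hg₁ : Differentiable ℝ g₁) (hb₁ : Differentiable ℝ b₁)
    (ha₂ : Differentiable ℝ a₂) (hg₂ : Differentiable ℝ g₂) (hb₂ : Differentiable ℝ b₂) :
    VBracket (shearField a₁ g₁ b₁) (shearField a₂ g₂ b₂) = fun p =>
      (a₁ p.2.2.1 * g₂ p.2.2.1 - a₂ p.2.2.1 * g₁ p.2.2.1, 0, 0,
        b₁ p.2.2.1 * g₂ p.2.2.1 - b₂ p.2.2.1 * g₁ p.2.2.1) := by
  funext p
  rw [VBracket, fderiv_shearField_apply (ha₂ _) (hg₂ _) (hb₂ _) rfl,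
    fderiv_shearField_apply (ha₁ _) (hg₁ _) (hb₁ _) rfl]
  simp only [shearField, Prod.mk_sub_mk, sub_zero]
  refine Prod.ext (by ring) (Prod.ext rfl (Prod.ext rfl (by ring)))

lemma contDiff_deriv_div_two_mul {σ g : ℝ → ℝ} (hσ : ContDiff ℝ (⊤ : ℕ∞) σ)
    (hσ0 : ∀ t, σ t ≠ 0) (hg : ContDiff ℝ (⊤ : ℕ∞) g) :
    ContDiff ℝ (⊤ : ℕ∞) fun s => deriv g s / (2 * σ s) :=
  (contDiff_infty_iff_deriv.mp hg).2.div (contDiff_const.mul hσ)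
    fun t => mul_ne_zero two_ne_zero (hσ0 t)

lemma deriv_mul_sub_mul_of_cross_eq {a₁ g₁ a₂ g₂ : ℝ → ℝ} {t : ℝ}
    (ha₁ : DifferentiableAt ℝ a₁ t) (hg₁ : DifferentiableAt ℝ g₁ t)
    (ha₂ : DifferentiableAt ℝ a₂ t) (hg₂ : DifferentiableAt ℝ g₂ t)
    (hcross : a₁ t * deriv g₂ t = a₂ t * deriv g₁ t) :
    deriv (fun s => a₁ s * g₂ s - a₂ s * g₁ s) t = deriv a₁ t * g₂ t - deriv a₂ t * g₁ t := by
  refine ((ha₁.hasDerivAt.mul hg₂.hasDerivAt).sub (ha₂.hasDerivAt.mul hg₁.hasDerivAt)).deriv.trans ?_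
  linear_combination hcross

theorem stmt15 (σ : ℝ → ℝ) (hσ : ContDiff ℝ (⊤ : ℕ∞) σ) (hσ0 : ∀ t, σ t ≠ 0)
    (g₁ g₂ : ℝ → ℝ)
    (hg₁ : ContDiff ℝ (⊤ : ℕ∞) g₁) (hg₂ : ContDiff ℝ (⊤ : ℕ∞) g₂) :
    VBracket (Yfield σ g₁) (Yfield σ g₂)
      = Xfield (fun t => -(1 / (2 * σ t)) * (g₁ t * deriv g₂ t - deriv g₁ t * g₂ t)) := by
  have diff : ∀ {f : ℝ → ℝ}, ContDiff ℝ (⊤ : ℕ∞) f → Differentiable ℝ f :=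
    fun hf => hf.differentiable (by simp)
  set a₁ := fun s => deriv g₁ s / (2 * σ s)
  set a₂ := fun s => deriv g₂ s / (2 * σ s)
  have ha₁ : ContDiff ℝ (⊤ : ℕ∞) a₁ := contDiff_deriv_div_two_mul hσ hσ0 hg₁
  have ha₂ : ContDiff ℝ (⊤ : ℕ∞) a₂ := contDiff_deriv_div_two_mul hσ hσ0 hg₂
  have hf : (fun t => -(1 / (2 * σ t)) * (g₁ t * deriv g₂ t - deriv g₁ t * g₂ t))
      = fun t => a₁ t * g₂ t - a₂ t * g₁ t := by
    funext t
    simp only [a₁, a₂]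
    ring
  have hf' (t : ℝ) : deriv (fun t => a₁ t * g₂ t - a₂ t * g₁ t) t
      = deriv a₁ t * g₂ t - deriv a₂ t * g₁ t :=
    deriv_mul_sub_mul_of_cross_eq (diff ha₁ t) (diff hg₁ t) (diff ha₂ t) (diff hg₂ t)
      (by simp only [a₁, a₂]; ring)
  rw [Yfield_eq_shearField, Yfield_eq_shearField, VBracket_shearField (diff ha₁) (diff hg₁)
    (diff (contDiff_infty_iff_deriv.mp ha₁).2) (diff ha₂) (diff hg₂)
    (diff (contDiff_infty_iff_deriv.mp ha₂).2), hf]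
  funext p
  simp only [Xfield, hf']
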